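/- arXiv:1705.10462 — 5 statements merged into one kernel-verified Lean document; each statement's English description precedes it below -/
import Mathlib

section
/- Let N ≥ 2 and let ρ be an N×N density matrix. Then the ternary complementarity relation P(ρ)² + C(ρ)² + S_L(ρ) ≤ 1 holds, where P is the which-path predictability, C is the l₁ quantum coherence, and S_L is the normalized linear entropy. -/
/-!
Write `p` for the diagonal of `ρ` and `j` for an index where it is maximal. Since `ρ` is Hermitian,
`tr ρ² = ∑ pₖ² + ∑_{i ≠ k} |ρᵢₖ|²`. Multiplied by `(N - 1)²`, the claim then follows from two
Cauchy–Schwarz inequalities: over the `N(N - 1)` off-diagonal entries,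
`(∑_{i ≠ k} |ρᵢₖ|)² ≤ N(N - 1) ∑_{i ≠ k} |ρᵢₖ|²`, and over the `N - 1` diagonal entries other than
`pⱼ`, `(1 - pⱼ)² ≤ (N - 1)(∑ pₖ² - pⱼ²)`; what remains is the identity
`(N pⱼ - 1)² = N(N - 1) pⱼ² + N(1 - pⱼ)² - (N - 1)`.
-/

open Matrix BigOperators ComplexOrder

/-- The largest diagonal entry (as a real number) of a complex matrix. -/
noncomputable def maxDiag (N : ℕ) (ρ : Matrix (Fin N) (Fin N) ℂ) : ℝ :=
  ⨆ k, (ρ k k).re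

/-- The which-path predictability P(ρ) = (N·p₁ − 1)/(N − 1). -/
noncomputable def pred (N : ℕ) (ρ : Matrix (Fin N) (Fin N) ℂ) : ℝ :=
  ((N : ℝ) * maxDiag N ρ - 1) / ((N : ℝ) - 1)

/-- The l₁ quantum coherence C(ρ) = (1/(N−1)) ∑_{i ≠ k} |ρ_ik|. -/
noncomputable def coh (N : ℕ) (ρ : Matrix (Fin N) (Fin N) ℂ) : ℝ :=
  (1 / ((N : ℝ) - 1)) * ∑ i, ∑ k, if i ≠ k then ‖ρ i k‖ else 0

/-- The normalized linear entropy S_L(ρ) = N(1 − tr(ρ²))/(N − 1). -/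
noncomputable def linEnt (N : ℕ) (ρ : Matrix (Fin N) (Fin N) ℂ) : ℝ :=
  (N : ℝ) * (1 - ((ρ * ρ).trace).re) / ((N : ℝ) - 1)

open Finset

section OffDiagonal

variable {ι : Type*} [Fintype ι] [DecidableEq ι]

lemma sum_sum_eq_sum_diag_add_sum_ite_ne {M : Type*} [AddCommMonoid M] (f : ι → ι → M) :
    ∑ i, ∑ k, f i k = ∑ i, f i i + ∑ i, ∑ k, if i ≠ k then f i k else 0 := by
  rw [← sum_add_distrib]
  refine sum_congr rfl fun i _ => ?_
  rw [← add_sum_erase _ _ (mem_univ i), ← sum_filter, filter_ne]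

lemma sum_sum_ite_ne_eq_sum_offDiag {M : Type*} [AddCommMonoid M] (f : ι → ι → M) :
    ∑ i, ∑ k, (if i ≠ k then f i k else 0) = ∑ x ∈ univ.offDiag, f x.1 x.2 := by
  rw [← sum_product', ← sum_filter]
  congr 1
  ext x
  simp

lemma sq_sum_sum_ite_ne_le (f : ι → ι → ℝ) :
    (∑ i, ∑ k, if i ≠ k then f i k else 0) ^ 2 ≤
      Fintype.card ι * (Fintype.card ι - 1) * ∑ i, ∑ k, if i ≠ k then f i k ^ 2 else 0 := by
  have hcard :
      ((univ.offDiag : Finset (ι × ι)).card : ℝ) = Fintype.card ι * (Fintype.card ι - 1) := by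
    rw [offDiag_card, card_univ, Nat.cast_sub (Nat.le_mul_self _)]
    push_cast
    ring
  rw [sum_sum_ite_ne_eq_sum_offDiag, sum_sum_ite_ne_eq_sum_offDiag (fun i k => f i k ^ 2), ← hcard]
  exact sq_sum_le_card_mul_sum_sq

lemma sq_one_sub_le_mul_sum_sq_sub {p : ι → ℝ} (hp : ∑ i, p i = 1) (j : ι) :
    (1 - p j) ^ 2 ≤ (Fintype.card ι - 1) * (∑ i, p i ^ 2 - p j ^ 2) := by
  have hsum : ∑ i ∈ univ.erase j, p i = 1 - p j := by
    rw [← hp, ← add_sum_erase _ _ (mem_univ j), add_sub_cancel_left]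
  have hsq : ∑ i ∈ univ.erase j, p i ^ 2 = ∑ i, p i ^ 2 - p j ^ 2 := by
    rw [← add_sum_erase _ _ (mem_univ j), add_sub_cancel_left]
  have hcard : ((univ.erase j).card : ℝ) = Fintype.card ι - 1 := by
    rw [card_erase_of_mem (mem_univ j), card_univ, Nat.cast_pred (Fintype.card_pos_iff.mpr ⟨j⟩)]
  rw [← hsum, ← hsq, ← hcard]
  exact sq_sum_le_card_mul_sum_sq

end OffDiagonal

lemma Matrix.IsHermitian.re_trace_mul_self {ι : Type*} [Fintype ι] [DecidableEq ι]
    {A : Matrix ι ι ℂ} (hA : A.IsHermitian) :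
    (A * A).trace.re = ∑ i, (A i i).re ^ 2 + ∑ i, ∑ k, if i ≠ k then ‖A i k‖ ^ 2 else 0 := by
  have hdiag (i : ι) : ‖A i i‖ ^ 2 = (A i i).re ^ 2 := by
    conv_lhs => rw [← hA.coe_re_apply_self i]
    simp
  have hentry (i k : ι) : (A i k * A k i).re = ‖A i k‖ ^ 2 := by
    rw [← hA.apply k i]
    simp [Complex.mul_conj', ← Complex.ofReal_pow]
  simp only [trace, diag, mul_apply, Complex.re_sum, hentry]
  rw [sum_sum_eq_sum_diag_add_sum_ite_ne]
  simp only [hdiag]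

lemma exists_maxDiag_eq {N : ℕ} [NeZero N] (ρ : Matrix (Fin N) (Fin N) ℂ) :
    ∃ j, maxDiag N ρ = (ρ j j).re := by
  obtain ⟨j, hj⟩ := exists_eq_ciSup_of_finite (f := fun k => (ρ k k).re)
  exact ⟨j, hj.symm⟩

lemma sum_re_diag_eq_one {ι : Type*} [Fintype ι] {A : Matrix ι ι ℂ} (hA : A.trace = 1) :
    ∑ i, (A i i).re = 1 := by
  simpa [trace, Complex.re_sum] using congrArg Complex.re hA

lemma complementarity_of_cauchySchwarz {n p A O L : ℝ} (hn : 1 < n)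
    (hdiag : (1 - p) ^ 2 ≤ (n - 1) * (A - p ^ 2)) (hoff : L ^ 2 ≤ n * (n - 1) * O) :
    ((n * p - 1) / (n - 1)) ^ 2 + (1 / (n - 1) * L) ^ 2 + n * (1 - (A + O)) / (n - 1) ≤ 1 := by
  have hc : 0 < n - 1 := sub_pos.mpr hn
  have key : (n * p - 1) ^ 2 + L ^ 2 + (n - 1) * (n * (1 - (A + O))) ≤ (n - 1) ^ 2 := by
    linear_combination n * hdiag + hoff
  calc _ = ((n * p - 1) ^ 2 + L ^ 2 + (n - 1) * (n * (1 - (A + O)))) / (n - 1) ^ 2 := by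
        field_simp
    _ ≤ 1 := (div_le_one (by positivity)).mpr key

/-- The ternary complementarity relation: P(ρ)² + C(ρ)² + S_L(ρ) ≤ 1. -/
theorem stmt4 {N : ℕ} (hN : 2 ≤ N) (ρ : Matrix (Fin N) (Fin N) ℂ)
    (hρ : ρ.PosSemidef) (htr : ρ.trace = 1) :
    (pred N ρ) ^ 2 + (coh N ρ) ^ 2 + linEnt N ρ ≤ 1 := by
  have : NeZero N := ⟨by omega⟩
  obtain ⟨j, hj⟩ := exists_maxDiag_eq ρ
  have hcard : (Fintype.card (Fin N) : ℝ) = N := by simp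
  have hdiag := sq_one_sub_le_mul_sum_sq_sub (sum_re_diag_eq_one htr) j
  have hoff := sq_sum_sum_ite_ne_le fun i k => ‖ρ i k‖
  rw [hcard] at hdiag hoff
  rw [pred, coh, linEnt, hj, hρ.1.re_trace_mul_self]
  exact complementarity_of_cauchySchwarz (by exact_mod_cast hN) hdiag hoff
end

section
/- Let N ≥ 2 and let ρ be an N×N density matrix. Then the wave-particle duality relation P(ρ)² + C(ρ)² ≤ 1 holds, where P is the which-path predictability and C is the l₁ quantum coherence. -/
open Matrix BigOperators ComplexOrder

/-!
With `a i = √(ρ i i)`, a unit vector with nonnegative entries, the 2×2 principal minors of `ρ`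
give `‖ρ i k‖ ≤ a i * a k`, hence `(N - 1) C(ρ) ≤ (∑ i, a i) ^ 2 - 1`. Splitting
`∑ i, a i = a k + r` with `r ^ 2 ≤ (N - 1) (1 - a k ^ 2)` (Cauchy–Schwarz) reduces the claim to a
two-variable inequality, whose extremal case is `2 t √((N - 1) (1 - t²)) ≤ 1 + (N - 2) t²`.
The bound holds for every diagonal entry, not only the largest one.
-/

namespace Matrix.PosSemidef

variable {ι 𝕜 : Type*} [RCLike 𝕜] {A : Matrix ι ι 𝕜}

theorem norm_apply_sq_le (hA : A.PosSemidef) (i j : ι) :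
    ‖A i j‖ ^ 2 ≤ RCLike.re (A i i) * RCLike.re (A j j) := by
  have hdet := (hA.submatrix ![j, i]).det_nonneg
  simp only [det_fin_two, submatrix_apply, cons_val_zero, cons_val_one] at hdet
  rw [← hA.isHermitian.apply j i, ← hA.isHermitian.coe_re_apply_self i,
    ← hA.isHermitian.coe_re_apply_self j, RCLike.star_def, RCLike.conj_mul] at hdet
  norm_cast at hdet
  linarith [mul_comm (RCLike.re (A i i)) (RCLike.re (A j j))]

theorem re_diag_nonneg (hA : A.PosSemidef) (i : ι) : 0 ≤ RCLike.re (A i i) :=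
  (RCLike.nonneg_iff.mp hA.diag_nonneg).1

theorem norm_apply_le_sqrt_mul_sqrt (hA : A.PosSemidef) (i j : ι) :
    ‖A i j‖ ≤ √(RCLike.re (A i i)) * √(RCLike.re (A j j)) := by
  rw [← Real.sqrt_mul (hA.re_diag_nonneg i)]
  exact Real.le_sqrt_of_sq_le (hA.norm_apply_sq_le i j)

theorem sum_offDiag_norm_le [Fintype ι] [DecidableEq ι] (hA : A.PosSemidef) :
    ∑ i, ∑ j, (if i ≠ j then ‖A i j‖ else 0) ≤
      (∑ i, √(RCLike.re (A i i))) ^ 2 - ∑ i, RCLike.re (A i i) := by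
  have hsq : (∑ i, √(RCLike.re (A i i))) ^ 2 - ∑ i, RCLike.re (A i i) =
      ∑ i, ∑ j, (√(RCLike.re (A i i)) * √(RCLike.re (A j j)) -
        if i = j then RCLike.re (A i i) else 0) := by
    simp only [Finset.sum_sub_distrib, Finset.sum_ite_eq, Finset.mem_univ, if_true, sq,
      Finset.sum_mul_sum]
  rw [hsq]
  gcongr with i _ j _
  by_cases hij : i = j
  · subst hij
    simp [Real.mul_self_sqrt (hA.re_diag_nonneg i)]
  · simpa [hij] using hA.norm_apply_le_sqrt_mul_sqrt i j

end Matrix.PosSemidef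

theorem sq_sub_one_add_sq_sub_one_le_of_sq_le {m t r : ℝ} (hm : 1 ≤ m) (ht : 0 ≤ t)
    (hrt : r ^ 2 ≤ m * (1 - t ^ 2)) (hone : 1 ≤ (t + r) ^ 2) :
    ((m + 1) * t ^ 2 - 1) ^ 2 + ((t + r) ^ 2 - 1) ^ 2 ≤ m ^ 2 := by
  set R := √(m * (1 - t ^ 2))
  have hq : 0 ≤ 1 - t ^ 2 := by nlinarith
  have hR : R ^ 2 = m * (1 - t ^ 2) := Real.sq_sqrt (by positivity)
  have hR0 : 0 ≤ R := Real.sqrt_nonneg _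
  have hrR : r ≤ R := Real.le_sqrt_of_sq_le hrt
  -- `(1 + (m - 1) t²)² - (2 t R)² = ((m + 1) t² - 1)²`
  have hamgm : 2 * t * R ≤ 1 + (m - 1) * t ^ 2 := by
    have hB : 0 ≤ 1 + (m - 1) * t ^ 2 := by nlinarith
    nlinarith [sq_nonneg ((m + 1) * t ^ 2 - 1), mul_nonneg ht hR0]
  have hup : (t + r) ^ 2 - 1 ≤ (m - 1) * (1 - t ^ 2) + 2 * t * R := by nlinarith
  have hup_sq : ((t + r) ^ 2 - 1) ^ 2 ≤ ((m - 1) * (1 - t ^ 2) + 2 * t * R) ^ 2 :=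
    pow_le_pow_left₀ (by linarith) hup 2
  nlinarith [mul_nonneg (mul_nonneg (by linarith : 0 ≤ m - 1) hq)
    (by linarith : 0 ≤ 1 + (m - 1) * t ^ 2 - 2 * t * R)]

theorem card_mul_sq_sub_one_add_sq_sub_one_le {ι : Type*} [Fintype ι] [DecidableEq ι]
    (hcard : 2 ≤ Fintype.card ι) {a : ι → ℝ} (ha : 0 ≤ a) (hnorm : ∑ i, a i ^ 2 = 1) (k : ι) :
    ((Fintype.card ι : ℝ) * a k ^ 2 - 1) ^ 2 + ((∑ i, a i) ^ 2 - 1) ^ 2 ≤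
      ((Fintype.card ι : ℝ) - 1) ^ 2 := by
  set r := ∑ i ∈ Finset.univ.erase k, a i
  have hsum : ∑ i, a i = a k + r := (Finset.add_sum_erase _ _ (Finset.mem_univ k)).symm
  have hrest : ∑ i ∈ Finset.univ.erase k, a i ^ 2 = 1 - a k ^ 2 := by
    rw [← hnorm, ← Finset.add_sum_erase _ _ (Finset.mem_univ k)]
    ring
  have hcard_erase : ((Finset.univ.erase k).card : ℝ) = Fintype.card ι - 1 := by
    rw [Finset.card_erase_of_mem (Finset.mem_univ k), Finset.card_univ, Nat.cast_pred (by omega)]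
  have hcs : r ^ 2 ≤ (Fintype.card ι - 1) * (1 - a k ^ 2) :=
    hcard_erase ▸ hrest ▸ sq_sum_le_card_mul_sum_sq
  have hone : 1 ≤ (a k + r) ^ 2 :=
    hsum ▸ hnorm ▸ Finset.sum_sq_le_sq_sum_of_nonneg fun i _ ↦ ha i
  have hm : (1 : ℝ) ≤ Fintype.card ι - 1 := by
    have : (2 : ℝ) ≤ Fintype.card ι := by exact_mod_cast hcard
    linarith
  rw [hsum]
  simpa using sq_sub_one_add_sq_sub_one_le_of_sq_le hm (ha k) hcs hone

/-- The wave-particle duality relation: P(ρ)² + C(ρ)² ≤ 1. -/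
theorem stmt6 {N : ℕ} (hN : 2 ≤ N) (ρ : Matrix (Fin N) (Fin N) ℂ)
    (hρ : ρ.PosSemidef) (htr : ρ.trace = 1) :
    (pred N ρ) ^ 2 + (coh N ρ) ^ 2 ≤ 1 := by
  have hm : (0 : ℝ) < N - 1 := by
    have : (2 : ℝ) ≤ N := by exact_mod_cast hN
    linarith
  have : NeZero N := ⟨by omega⟩
  obtain ⟨k, hk⟩ := exists_eq_ciSup_of_finite (f := fun k ↦ (ρ k k).re)
  have hdiag_sum : ∑ i, (ρ i i).re = 1 := by
    simpa [trace, Complex.re_sum] using congrArg Complex.re htr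
  have hdiag_nonneg : ∀ i, 0 ≤ (ρ i i).re := hρ.re_diag_nonneg
  have hnorm : ∑ i, √((ρ i i).re) ^ 2 = 1 := by
    simpa [Real.sq_sqrt (hdiag_nonneg _)] using hdiag_sum
  have hbound := card_mul_sq_sub_one_add_sq_sub_one_le (by simpa using hN)
    (fun i ↦ Real.sqrt_nonneg _) hnorm k
  rw [Fintype.card_fin, Real.sq_sqrt (hdiag_nonneg k)] at hbound
  have hoff := hρ.sum_offDiag_norm_le
  simp only [RCLike.re_to_complex, hdiag_sum] at hoff
  have hoff_nonneg : 0 ≤ ∑ i, ∑ j, if i ≠ j then ‖ρ i j‖ else 0 := by positivity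
  have hoff_sq := pow_le_pow_left₀ hoff_nonneg hoff 2
  calc pred N ρ ^ 2 + coh N ρ ^ 2
      = ((N * (ρ k k).re - 1) ^ 2 + (∑ i, ∑ j, if i ≠ j then ‖ρ i j‖ else 0) ^ 2) /
          ((N : ℝ) - 1) ^ 2 := by
        rw [pred, coh, maxDiag, ← hk]
        field_simp
    _ ≤ 1 := (div_le_one (by positivity)).2 (by linarith)
end

section
/- Let N ≥ 2 and let ρ be an N×N density matrix. Then the Dürr three-term equality holds: P_D(ρ)² + V_D(ρ)² + S_L(ρ) = 1, where P_D(ρ) = sqrt( (N/(N−1)) ∑_j (ρ_jj − 1/N)² ) is Dürr's predictability, V_D(ρ) = sqrt( (N/(N−1)) ∑_{j ≠ k} |ρ_jk|² ) is Dürr's visibility, and S_L is the normalized linear entropy. -/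
/-!
For Hermitian ρ the purity splits as tr ρ² = ∑ⱼ ρⱼⱼ² + ∑_{j ≠ k} |ρⱼₖ|², and since ∑ⱼ ρⱼⱼ = 1,
∑ⱼ (ρⱼⱼ − 1/N)² = ∑ⱼ ρⱼⱼ² − 1/N. So P_D² and V_D² are N/(N−1) times the two parts of the purity
(minus 1/N), S_L is N/(N−1) times (1 − tr ρ²), the purity cancels in the sum, and what remains is
N/(N−1) · (1 − 1/N) = 1.
-/

open Matrix BigOperators ComplexOrder

/-- Dürr's predictability. -/
noncomputable def durrPred (N : ℕ) (ρ : Matrix (Fin N) (Fin N) ℂ) : ℝ :=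
  Real.sqrt (((N : ℝ) / ((N : ℝ) - 1)) * ∑ j, ((ρ j j).re - 1 / (N : ℝ)) ^ 2)

/-- Dürr's visibility. -/
noncomputable def durrVis (N : ℕ) (ρ : Matrix (Fin N) (Fin N) ℂ) : ℝ :=
  Real.sqrt (((N : ℝ) / ((N : ℝ) - 1)) *
    ∑ j, ∑ k, if j ≠ k then (‖ρ j k‖) ^ 2 else 0)

theorem Fintype.sum_sum_eq_sum_diag_add_sum_sum_ne {ι M : Type*} [Fintype ι] [DecidableEq ι]
    [AddCommMonoid M] (f : ι → ι → M) :
    ∑ i, ∑ j, f i j = ∑ i, f i i + ∑ i, ∑ j, if i ≠ j then f i j else 0 := by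
  rw [← Finset.sum_add_distrib]
  refine Finset.sum_congr rfl fun i _ => ?_
  rw [← Fintype.sum_ite_eq i (f i), ← Finset.sum_add_distrib]
  refine Finset.sum_congr rfl fun j _ => ?_
  by_cases h : i = j <;> simp [h]

theorem Fintype.sum_sq_sub_inv_card_of_sum_eq_one {ι : Type*} [Fintype ι] (p : ι → ℝ)
    (hp : ∑ i, p i = 1) :
    ∑ i, (p i - 1 / (Fintype.card ι : ℝ)) ^ 2 = ∑ i, p i ^ 2 - 1 / (Fintype.card ι : ℝ) := by
  have hcard : (Fintype.card ι : ℝ) ≠ 0 := by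
    rintro h
    rw [Nat.cast_eq_zero, Fintype.card_eq_zero_iff] at h
    simp at hp
  simp only [sub_sq, Finset.sum_add_distrib, Finset.sum_sub_distrib, ← Finset.sum_mul,
    ← Finset.mul_sum, hp, Finset.sum_const, Finset.card_univ, nsmul_eq_mul]
  field_simp
  ring

namespace Matrix

variable {𝕜 m n : Type*} [RCLike 𝕜] [Fintype n]

theorem re_trace_mul_conjTranspose [Fintype m] (A : Matrix m n 𝕜) :
    RCLike.re (A * Aᴴ).trace = ∑ i, ∑ j, ‖A i j‖ ^ 2 := by
  simp only [trace, diag_apply, mul_apply, conjTranspose_apply, RCLike.star_def, RCLike.mul_conj,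
    map_sum]
  norm_cast

theorem IsHermitian.re_trace_mul_self_s11 [DecidableEq n] {A : Matrix n n 𝕜} (hA : A.IsHermitian) :
    RCLike.re (A * A).trace =
      ∑ i, RCLike.re (A i i) ^ 2 + ∑ i, ∑ j, if i ≠ j then ‖A i j‖ ^ 2 else 0 := by
  have hAA : A * A = A * Aᴴ := by rw [hA.eq]
  rw [hAA, re_trace_mul_conjTranspose, Fintype.sum_sum_eq_sum_diag_add_sum_sum_ne]
  congr 1
  refine Finset.sum_congr rfl fun i _ => ?_
  rw [← hA.coe_re_apply_self i, RCLike.norm_ofReal, sq_abs, RCLike.ofReal_re]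

end Matrix

-- Also at N = 0 and N = 1, where the quotient is 0 / (-1) and the junk value 1 / 0 = 0.
theorem natCast_div_natCast_sub_one_nonneg (N : ℕ) : 0 ≤ (N : ℝ) / ((N : ℝ) - 1) := by
  rcases N with _ | N
  · simp
  · push_cast
    simp only [add_sub_cancel_right]
    positivity

section Durr

variable {N : ℕ} {ρ : Matrix (Fin N) (Fin N) ℂ}

theorem durrPred_sq (htr : ρ.trace = 1) :
    durrPred N ρ ^ 2 = (N : ℝ) / ((N : ℝ) - 1) * (∑ j, (ρ j j).re ^ 2 - 1 / (N : ℝ)) := by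
  have hdiag : ∑ j, (ρ j j).re = 1 := by
    simpa [Matrix.trace, Complex.re_sum] using congrArg Complex.re htr
  have hvar := Fintype.sum_sq_sub_inv_card_of_sum_eq_one _ hdiag
  rw [Fintype.card_fin] at hvar
  rw [durrPred, Real.sq_sqrt (mul_nonneg (natCast_div_natCast_sub_one_nonneg N) (by positivity)),
    hvar]

theorem durrVis_sq :
    durrVis N ρ ^ 2 = (N : ℝ) / ((N : ℝ) - 1) * ∑ j, ∑ k, if j ≠ k then ‖ρ j k‖ ^ 2 else 0 :=
  Real.sq_sqrt (mul_nonneg (natCast_div_natCast_sub_one_nonneg N) (by positivity))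

theorem linEnt_eq (hρ : ρ.IsHermitian) :
    linEnt N ρ = (N : ℝ) / ((N : ℝ) - 1) *
      (1 - (∑ j, (ρ j j).re ^ 2 + ∑ j, ∑ k, if j ≠ k then ‖ρ j k‖ ^ 2 else 0)) := by
  have hpurity : ((ρ * ρ).trace).re =
      ∑ j, (ρ j j).re ^ 2 + ∑ j, ∑ k, if j ≠ k then ‖ρ j k‖ ^ 2 else 0 :=
    hρ.re_trace_mul_self_s11
  rw [linEnt, hpurity]
  ring

end Durr

/-- Dürr's three-term equality: P_D(ρ)² + V_D(ρ)² + S_L(ρ) = 1. -/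
theorem stmt11 {N : ℕ} (hN : 2 ≤ N) (ρ : Matrix (Fin N) (Fin N) ℂ)
    (hρ : ρ.PosSemidef) (htr : ρ.trace = 1) :
    (durrPred N ρ) ^ 2 + (durrVis N ρ) ^ 2 + linEnt N ρ = 1 := by
  have hN1 : (N : ℝ) - 1 ≠ 0 := by
    rw [sub_ne_zero, Nat.cast_ne_one]
    omega
  have hN0 : (N : ℝ) ≠ 0 := by
    rw [Nat.cast_ne_zero]
    omega
  rw [durrPred_sq htr, durrVis_sq, linEnt_eq hρ.isHermitian]
  field_simp
  ring
end

section
/- Let N ≥ 2 and let ρ₁, ρ₂ be N×N density matrices. For all real a, b with a + b = 1 and a ∈ [0,1], the square root of the normalized linear entropy is concave: sqrt(S_L(a·ρ₁ + b·ρ₂)) ≥ a·sqrt(S_L(ρ₁)) + b·sqrt(S_L(ρ₂)). -/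
/-!
Write `‖ρ‖` for the Frobenius norm. For a Hermitian `ρ`, `tr(ρ²) = ‖ρ‖²`, so
`√S_L(ρ) = √(N/(N-1)) · √(1 - ‖ρ‖²)`, and a density matrix has `‖ρ‖ ≤ tr ρ = 1`. It therefore
suffices that `x ↦ √(1 - ‖x‖²)` is concave on the closed unit ball of any real normed space. That
follows from the concavity of the upper unit semicircle `s ↦ √(1 - s²)`, which is antitone on
`[0, 1]`, composed with the convex function `‖·‖`.
-/

open Matrix BigOperators ComplexOrder

theorem concaveOn_sqrt_one_sub_sq : ConcaveOn ℝ (Set.Icc (-1) 1) fun s : ℝ ↦ √(1 - s ^ 2) := by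
  refine ⟨convex_Icc _ _, fun s hs t ht a b ha hb hab ↦ ?_⟩
  have hu : √(1 - s ^ 2) ^ 2 = 1 - s ^ 2 := Real.sq_sqrt (by nlinarith [hs.1, hs.2])
  have hv : √(1 - t ^ 2) ^ 2 = 1 - t ^ 2 := Real.sq_sqrt (by nlinarith [ht.1, ht.2])
  simp only [smul_eq_mul]
  refine Real.le_sqrt_of_sq_le ?_
  obtain rfl : b = 1 - a := by linarith
  -- `(s, √(1 - s²))` and `(t, √(1 - t²))` are unit vectors, so the defect
  -- `1 - s t - √(1 - s²) √(1 - t²)` is half their squared distance.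
  nlinarith [mul_nonneg (mul_nonneg ha hb)
    (add_nonneg (sq_nonneg (s - t)) (sq_nonneg (√(1 - s ^ 2) - √(1 - t ^ 2))))]

theorem concaveOn_sqrt_one_sub_norm_sq {E : Type*} [SeminormedAddCommGroup E] [NormedSpace ℝ E] :
    ConcaveOn ℝ (Metric.closedBall (0 : E) 1) fun x ↦ √(1 - ‖x‖ ^ 2) := by
  refine ⟨convex_closedBall 0 1, fun x hx y hy a b ha hb hab ↦ ?_⟩
  rw [mem_closedBall_zero_iff] at hx hy
  have hxy : ‖a • x + b • y‖ ≤ a • ‖x‖ + b • ‖y‖ :=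
    (convexOn_norm convex_univ).2 trivial trivial ha hb hab
  calc a • √(1 - ‖x‖ ^ 2) + b • √(1 - ‖y‖ ^ 2) ≤ √(1 - (a • ‖x‖ + b • ‖y‖) ^ 2) :=
        concaveOn_sqrt_one_sub_sq.2 ⟨by linarith [norm_nonneg x], hx⟩
          ⟨by linarith [norm_nonneg y], hy⟩ ha hb hab
    _ ≤ √(1 - ‖a • x + b • y‖ ^ 2) := by gcongr

namespace Matrix

def densityMatrices (𝕜 n : Type*) [RCLike 𝕜] [Fintype n] : Set (Matrix n n 𝕜) :=
  {ρ | ρ.PosSemidef ∧ ρ.trace = 1}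

variable {𝕜 m n : Type*} [RCLike 𝕜] [Fintype m] [Fintype n]

theorem convex_densityMatrices : Convex ℝ (densityMatrices 𝕜 n) := by
  rintro ρ ⟨hρ, htrρ⟩ σ ⟨hσ, htrσ⟩ a b ha hb hab
  refine ⟨(hρ.smul ha).add (hσ.smul hb), ?_⟩
  rw [trace_add, trace_smul, trace_smul, htrρ, htrσ, ← add_smul, hab, one_smul]

section Frobenius

open scoped Norms.Frobenius

theorem frobenius_norm_sq_eq_re_trace_conjTranspose_mul_self (A : Matrix m n 𝕜) :
    ‖A‖ ^ 2 = RCLike.re (Aᴴ * A).trace := by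
  rw [frobenius_norm_def, ← Real.rpow_natCast, ← Real.rpow_mul (by positivity)]
  norm_num [trace, mul_apply, Finset.sum_comm (γ := m), RCLike.conj_mul]

theorem IsHermitian.re_trace_mul_self_eq_frobenius_norm_sq {A : Matrix n n 𝕜}
    (hA : A.IsHermitian) : RCLike.re (A * A).trace = ‖A‖ ^ 2 := by
  rw [frobenius_norm_sq_eq_re_trace_conjTranspose_mul_self, hA.eq]

theorem PosSemidef.frobenius_norm_le_re_trace {A : Matrix n n 𝕜} (hA : A.PosSemidef) :
    ‖A‖ ≤ RCLike.re A.trace := by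
  classical
  open scoped MatrixOrder in
  obtain ⟨B, rfl⟩ := CStarAlgebra.nonneg_iff_eq_star_mul_self.mp hA.nonneg
  calc ‖star B * B‖ ≤ ‖Bᴴ‖ * ‖B‖ := frobenius_norm_mul _ _
    _ = RCLike.re (Bᴴ * B).trace := by
      rw [frobenius_norm_conjTranspose, ← sq, frobenius_norm_sq_eq_re_trace_conjTranspose_mul_self]

theorem densityMatrices_subset_closedBall : densityMatrices 𝕜 n ⊆ Metric.closedBall 0 1 := by
  rintro ρ ⟨hρ, htr⟩
  simpa [htr] using hρ.frobenius_norm_le_re_trace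

theorem IsHermitian.linEnt_eq {N : ℕ} {ρ : Matrix (Fin N) (Fin N) ℂ} (hρ : ρ.IsHermitian) :
    linEnt N ρ = N / (N - 1) * (1 - ‖ρ‖ ^ 2) := by
  rw [linEnt, ← RCLike.re_eq_complex_re, hρ.re_trace_mul_self_eq_frobenius_norm_sq]
  ring

theorem concaveOn_sqrt_linEnt (N : ℕ) :
    ConcaveOn ℝ (densityMatrices ℂ (Fin N)) fun ρ ↦ √(linEnt N ρ) := by
  have hN : 0 ≤ (N : ℝ) / (N - 1) := by
    rcases N.eq_zero_or_pos with rfl | hN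
    · simp
    · exact div_nonneg N.cast_nonneg (sub_nonneg.2 (Nat.one_le_cast.2 hN))
  have hball : ConcaveOn ℝ (densityMatrices ℂ (Fin N)) fun ρ ↦ √(1 - ‖ρ‖ ^ 2) :=
    concaveOn_sqrt_one_sub_norm_sq.subset densityMatrices_subset_closedBall
      convex_densityMatrices
  refine (hball.smul (Real.sqrt_nonneg ((N : ℝ) / (N - 1)))).congr fun ρ hρ ↦ ?_
  rw [hρ.1.isHermitian.linEnt_eq, Real.sqrt_mul hN]
  rfl

end Frobenius

end Matrix

theorem stmt14_general {N : ℕ} (ρ₁ ρ₂ : Matrix (Fin N) (Fin N) ℂ)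
    (hρ₁ : ρ₁.PosSemidef) (htr₁ : ρ₁.trace = 1)
    (hρ₂ : ρ₂.PosSemidef) (htr₂ : ρ₂.trace = 1)
    (a b : ℝ) (hab : a + b = 1) (ha0 : 0 ≤ a) (ha1 : a ≤ 1) :
    Real.sqrt (linEnt N ((a : ℂ) • ρ₁ + (b : ℂ) • ρ₂)) ≥
      a * Real.sqrt (linEnt N ρ₁) + b * Real.sqrt (linEnt N ρ₂) := by
  have hconcave := (concaveOn_sqrt_linEnt N).2 ⟨hρ₁, htr₁⟩ ⟨hρ₂, htr₂⟩ ha0 (by linarith) hab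
  simpa only [Complex.coe_smul, smul_eq_mul] using hconcave

/-- Concavity of the square root of the normalized linear entropy. -/
theorem stmt14 {N : ℕ} (hN : 2 ≤ N) (ρ₁ ρ₂ : Matrix (Fin N) (Fin N) ℂ)
    (hρ₁ : ρ₁.PosSemidef) (htr₁ : ρ₁.trace = 1)
    (hρ₂ : ρ₂.PosSemidef) (htr₂ : ρ₂.trace = 1)
    (a b : ℝ) (hab : a + b = 1) (ha0 : 0 ≤ a) (ha1 : a ≤ 1) :
    Real.sqrt (linEnt N ((a : ℂ) • ρ₁ + (b : ℂ) • ρ₂)) ≥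
      a * Real.sqrt (linEnt N ρ₁) + b * Real.sqrt (linEnt N ρ₂) :=
  stmt14_general ρ₁ ρ₂ hρ₁ htr₁ hρ₂ htr₂ a b hab ha0 ha1
end

section
/- Let N ≥ 2 and let ρ be an N×N density matrix whose diagonal consists of one maximal entry p₁ and N−1 entries all equal to p₂ = (1 − p₁)/(N − 1), and whose off-diagonal entries all have the same modulus. Then the ternary complementarity relation is saturated: P(ρ)² + C(ρ)² + S_L(ρ) = 1. -/
open Matrix BigOperators ComplexOrder

/-!
Let c be the common modulus of the off-diagonal entries. Then C(ρ) = N c, and since ρ is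
Hermitian, tr ρ² = ∑ |ρ_ik|² = p₁² + (N − 1) p₂² + N (N − 1) c². The c² terms of C² and S_L
cancel, and with p₂ = (1 − p₁)/(N − 1) what is left is an identity in p₁ alone.
-/

open Finset

section OffDiagonal

variable {ι : Type*} [Fintype ι] [DecidableEq ι]

lemma sum_sum_ite_ne_eq_of_forall_ne {R : Type*} [Ring R] {f : ι → ι → R} {c : R}
    (hf : ∀ i j, i ≠ j → f i j = c) :
    ∑ i, ∑ j, (if i ≠ j then f i j else 0) = Fintype.card ι * (Fintype.card ι - 1) * c := by
  have hrow (i : ι) : ∑ j, (if i ≠ j then f i j else 0) = (Fintype.card ι - 1) * c := by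
    rw [← sum_filter, sum_congr rfl fun j hj => hf i j (mem_filter.1 hj).2, sum_const,
      filter_ne, card_erase_of_mem (mem_univ i), card_univ, nsmul_eq_mul,
      Nat.cast_pred (Fintype.card_pos_iff.2 ⟨i⟩)]
  simp only [hrow, sum_const, card_univ, nsmul_eq_mul, mul_assoc]

lemma sum_eq_add_mul_of_forall_ne {R : Type*} [Ring R] {f : ι → R} {a : R} (i₀ : ι) (hf : ∀ i, i ≠ i₀ → f i = a) :
    ∑ i, f i = f i₀ + (Fintype.card ι - 1) * a := by
  rw [← add_sum_erase _ _ (mem_univ i₀), sum_congr rfl fun i hi => hf i (ne_of_mem_erase hi),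
    sum_const, card_erase_of_mem (mem_univ i₀), card_univ, nsmul_eq_mul,
    Nat.cast_pred (Fintype.card_pos_iff.2 ⟨i₀⟩)]

lemma sum_eq_diag_add_sum_ite_ne {M : Type*} [AddCommMonoid M] (f : ι → ι → M) :
    ∑ i, ∑ j, f i j = ∑ i, f i i + ∑ i, ∑ j, (if i ≠ j then f i j else 0) := by
  rw [← sum_add_distrib]
  refine sum_congr rfl fun i _ => ?_
  rw [← Fintype.sum_ite_eq i (f i), ← sum_add_distrib]
  refine sum_congr rfl fun j _ => ?_
  split_ifs <;> simp_all

end OffDiagonal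

lemma Matrix.IsHermitian.re_trace_mul_self_s18 {ι 𝕜 : Type*} [Fintype ι] [RCLike 𝕜]
    {A : Matrix ι ι 𝕜} (hA : A.IsHermitian) :
    RCLike.re (A * A).trace = ∑ i, ∑ j, ‖A i j‖ ^ 2 := by
  simp only [trace, diag, mul_apply, map_sum]
  refine sum_congr rfl fun i _ => sum_congr rfl fun j _ => ?_
  rw [← hA.apply j i, mul_comm, RCLike.star_def, RCLike.conj_mul]
  norm_cast

lemma Matrix.IsHermitian.re_trace_mul_self_of_forall_ne {ι 𝕜 : Type*} [Fintype ι] [DecidableEq ι]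
    [RCLike 𝕜] {A : Matrix ι ι 𝕜} (hA : A.IsHermitian) {c : ℝ}
    (hoff : ∀ i j, i ≠ j → ‖A i j‖ = c) :
    RCLike.re (A * A).trace =
      ∑ i, RCLike.re (A i i) ^ 2 + Fintype.card ι * (Fintype.card ι - 1) * c ^ 2 := by
  have hdiag (i : ι) : ‖A i i‖ ^ 2 = RCLike.re (A i i) ^ 2 := by
    rw [← hA.coe_re_apply_self i, RCLike.norm_ofReal, sq_abs, RCLike.ofReal_re]
  rw [hA.re_trace_mul_self_s18, sum_eq_diag_add_sum_ite_ne, sum_congr rfl fun i _ => hdiag i,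
    sum_sum_ite_ne_eq_of_forall_ne fun i j h => by rw [hoff i j h]]

lemma coh_eq_of_forall_ne {N : ℕ} (hN : N ≠ 1) {ρ : Matrix (Fin N) (Fin N) ℂ} {c : ℝ}
    (hoff : ∀ i j, i ≠ j → ‖ρ i j‖ = c) :
    coh N ρ = N * c := by
  have hN' : (N : ℝ) - 1 ≠ 0 := sub_ne_zero.2 (by exact_mod_cast hN)
  rw [coh, sum_sum_ite_ne_eq_of_forall_ne hoff, Fintype.card_fin]
  field_simp

theorem stmt18_general {N : ℕ} (hN : 2 ≤ N) (ρ : Matrix (Fin N) (Fin N) ℂ)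
    (hρ : ρ.PosSemidef)
    (k₀ : Fin N)
    (hmax : (ρ k₀ k₀).re = maxDiag N ρ)
    (hd : ∀ k : Fin N, k ≠ k₀ →
      (ρ k k).re = (1 - maxDiag N ρ) / ((N : ℝ) - 1))
    (hoff : ∀ i k l m : Fin N, i ≠ k → l ≠ m →
      ‖ρ i k‖ = ‖ρ l m‖) :
    (pred N ρ) ^ 2 + (coh N ρ) ^ 2 + linEnt N ρ = 1 := by
  obtain ⟨i₀, hi₀⟩ : ∃ i, i ≠ k₀ :=
    Fintype.exists_ne_of_one_lt_card (by rw [Fintype.card_fin]; omega) k₀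
  have hoff₀ (i k : Fin N) (h : i ≠ k) : ‖ρ i k‖ = ‖ρ i₀ k₀‖ := hoff i k i₀ k₀ h hi₀
  have htrace := hρ.isHermitian.re_trace_mul_self_of_forall_ne hoff₀
  simp only [RCLike.re_to_complex, Fintype.card_fin] at htrace
  rw [sum_eq_add_mul_of_forall_ne k₀ fun k hk => by rw [hd k hk], Fintype.card_fin,
    hmax] at htrace
  have hN' : (N : ℝ) - 1 ≠ 0 := sub_ne_zero.2 (by norm_cast; omega)
  rw [pred, linEnt, coh_eq_of_forall_ne (by omega) hoff₀, htrace]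
  field_simp
  ring

/-- Saturation of the TCR: for a density matrix whose diagonal has one maximal
entry p₁ and N−1 entries equal to (1−p₁)/(N−1), and whose off-diagonal entries
all have the same modulus, P(ρ)² + C(ρ)² + S_L(ρ) = 1. -/
theorem stmt18 {N : ℕ} (hN : 2 ≤ N) (ρ : Matrix (Fin N) (Fin N) ℂ)
    (hρ : ρ.PosSemidef) (htr : ρ.trace = 1)
    (k₀ : Fin N)
    (hmax : (ρ k₀ k₀).re = maxDiag N ρ)
    (hd : ∀ k : Fin N, k ≠ k₀ →
      (ρ k k).re = (1 - maxDiag N ρ) / ((N : ℝ) - 1))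
    (hoff : ∀ i k l m : Fin N, i ≠ k → l ≠ m →
      ‖ρ i k‖ = ‖ρ l m‖) :
    (pred N ρ) ^ 2 + (coh N ρ) ^ 2 + linEnt N ρ = 1 :=
  stmt18_general hN ρ hρ k₀ hmax hd hoff
end
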